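/- arXiv:1705.02955 — 4 statements merged into one kernel-verified Lean document; each statement's English description precedes it below -/
import Mathlib

section
/- Resolving safety: let player 2 play blueprint σ_2, and let σ^S be a Nash equilibrium of the re-solve augmented game in which player 1 at each root infoset I_1 chooses between a terminal alternative payoff equal to CBV^{σ_2}(I_1) and entering the subgame S. Then the strategy σ'_2 that follows σ_2 outside S and σ^S_2 inside S satisfies: player 1's best-response value against σ'_2 at each root infoset of S is at most CBV^{σ_2}(I_1); consequently exp(σ'_2) ≤ exp(σ_2). -/
/-! Evaluating the augmented game at the blueprint restriction gives the value `∑ w I * CBV(I)`,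
since there `max (CBV I) (v I) = CBV I`. Each term `w I * max (CBV I) (v τ I)` dominates
`w I * CBV I`, so a minimiser of the augmented value cannot let any entering value exceed the
alternative payoff: one strict term would push the sum above the blueprint's value. Monotonicity of
the full best response then transfers these pointwise bounds to exploitability. -/

theorem le_of_sum_mul_max_le_sum_mul {ι R : Type*} [Ring R] [LinearOrder R]
    [IsStrictOrderedRing R] {s : Finset ι} {w c x : ι → R} (hw : ∀ i ∈ s, 0 < w i)
    (h : ∑ i ∈ s, w i * max (c i) (x i) ≤ ∑ i ∈ s, w i * c i) :
    ∀ i ∈ s, x i ≤ c i := by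
  by_contra! ⟨j, hj, hcx⟩
  have hlt : ∑ i ∈ s, w i * c i < ∑ i ∈ s, w i * max (c i) (x i) :=
    Finset.sum_lt_sum (fun i hi => mul_le_mul_of_nonneg_left (le_max_left _ _) (hw i hi).le)
      ⟨j, hj, mul_lt_mul_of_pos_left (lt_max_of_lt_right hcx) (hw j hj)⟩
  exact hlt.not_ge h

/-- **Resolving safety.** Abstract model of subgame Resolving: `ι` indexes the root
infosets of the subgame `S`; `w I > 0` is the chance weight `∑_{h∈I} π^σ_{-1}(h)`;
`cbvBlue I = CBV^{σ₂}(I)` is the alternative payoff; `v τ I` is player 1's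
best-response value for entering `S` at `I` when player 2 plays the subgame
strategy `τ`; the blueprint restriction `blue` satisfies `v blue I = cbvBlue I`.
The augmented-game value (with player 1 best responding) is
`AU τ = ∑ I, w I * max (CBV^{σ₂}(I)) (v τ I)`, and `σS` is a Nash equilibrium of
the augmented game, i.e. it minimizes `AU`. `fullBR` gives player 1's
best-response value of the full game as a monotone function of the entering
values, and `gv` is the game value, so `fullBR f - gv` is the exploitability of
the combined strategy with entering values `f`. Conclusion: player 1's
best-response value against `σ'₂` at each root infoset is at most `CBV^{σ₂}(I)`,
and consequently `exp(σ'₂) ≤ exp(σ₂)`. -/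
theorem resolving_safety
    {ι : Type*} [Fintype ι] {SubStrat : Type*}
    (w : ι → ℝ) (hw : ∀ I, 0 < w I)
    (cbvBlue : ι → ℝ)
    (v : SubStrat → ι → ℝ)
    (blue : SubStrat) (hblue : ∀ I, v blue I = cbvBlue I)
    (AU : SubStrat → ℝ)
    (hAU : ∀ τ, AU τ = ∑ I, w I * max (cbvBlue I) (v τ I))
    (σS : SubStrat) (hNash : ∀ τ, AU σS ≤ AU τ)
    (fullBR : (ι → ℝ) → ℝ)
    (hmono : ∀ f g : ι → ℝ, (∀ I, f I ≤ g I) → fullBR f ≤ fullBR g)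
    (gv : ℝ) :
    (∀ I, v σS I ≤ cbvBlue I) ∧
    fullBR (v σS) - gv ≤ fullBR (fun I => cbvBlue I) - gv := by
  have hAU_blue : AU blue = ∑ I, w I * cbvBlue I := by simp only [hAU, hblue, max_self]
  have hσS_le_blue : ∑ I, w I * max (cbvBlue I) (v σS I) ≤ ∑ I, w I * cbvBlue I := by
    rw [← hAU, ← hAU_blue]
    exact hNash blue
  have hsafe : ∀ I, v σS I ≤ cbvBlue I := fun I =>
    le_of_sum_mul_max_le_sum_mul (fun I _ => hw I) hσS_le_blue I (Finset.mem_univ I)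
  exact ⟨hsafe, sub_le_sub_right (hmono _ _ hsafe) gv⟩
end

section
/- In the Resolving augmented game for Coin Toss (alternative payoffs 0 for Heads and 1/2 for Tails), the blueprint strategy of Player 2 (Heads 1/2, Tails 1/4, Forfeit 1/4) is part of a Nash equilibrium of the augmented game, even though the Forfeit action is strictly dominated in the subgame. -/
/-!
Player 1 may always take the alternative payoffs, so whatever Player 2 does in the subgame the
augmented-game value is at least `3/5 · 0 + 2/5 · 1/2 = 1/5`. The blueprint leaves Player 1's
entering values equal to the alternative payoffs, so it attains this lower bound and is therefore
a minimizer; that Forfeit is dominated in the subgame plays no role in the augmented game.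
-/

/-- Player 2's value (= player 1's best-response payoff) in the Resolving
augmented game for Coin Toss when player 2 plays Heads, Tails, Forfeit in the
subgame with probabilities `h, t, f`. Chance reaches the Heads root in
proportion `3/4` and the Tails root in proportion `1/2` (normalized `3/5, 2/5`);
the alternative payoffs are `0` (Heads) and `1/2` (Tails); player 1's entering
values are `-h + t + f` (Heads) and `h - t + f` (Tails). -/
noncomputable def augU (h t f : ℝ) : ℝ :=
  (3/5) * max 0 (-h + t + f) + (2/5) * max (1/2) (h - t + f)

theorem one_fifth_le_augU (h t f : ℝ) : 1/5 ≤ augU h t f := by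
  have hHeads := le_max_left (0 : ℝ) (-h + t + f)
  have hTails := le_max_left (1/2 : ℝ) (h - t + f)
  unfold augU
  linarith

theorem augU_eq_one_fifth_of_le {h t f : ℝ} (hHeads : -h + t + f ≤ 0)
    (hTails : h - t + f ≤ 1/2) : augU h t f = 1/5 := by
  rw [augU, max_eq_left hHeads, max_eq_left hTails]
  norm_num

/-- In the Resolving augmented game for Coin Toss (alternative payoffs `0` for
Heads and `1/2` for Tails), the blueprint strategy of Player 2
(Heads `1/2`, Tails `1/4`, Forfeit `1/4`) makes player 1's entering values equal
to the alternative payoffs (`0` for Heads, `1/2` for Tails) and minimizes the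
augmented-game value over all player-2 subgame strategies — hence it is part of
a Nash equilibrium of the augmented game — even though Forfeit is strictly
dominated in the subgame (the mixture ½·Heads + ½·Tails gives player 1 payoff
`0 < 1` from both coin states). -/
theorem blueprint_is_nash_in_resolve_augmented_game :
    (-(1/2 : ℝ) + 1/4 + 1/4 = 0) ∧
    ((1/2 : ℝ) - 1/4 + 1/4 = 1/2) ∧
    (∀ h t f : ℝ, 0 ≤ h → 0 ≤ t → 0 ≤ f → h + t + f = 1 →
      augU (1/2) (1/4) (1/4) ≤ augU h t f) ∧
    ((1/2 : ℝ) * (-1) + (1/2) * 1 < 1 ∧ (1/2 : ℝ) * 1 + (1/2) * (-1) < 1) := by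
  have hHeads : -(1/2 : ℝ) + 1/4 + 1/4 = 0 := by norm_num
  have hTails : (1/2 : ℝ) - 1/4 + 1/4 = 1/2 := by norm_num
  refine ⟨hHeads, hTails, fun h t f _ _ _ _ => ?_, by norm_num, by norm_num⟩
  rw [augU_eq_one_fifth_of_le hHeads.le hTails.le]
  exact one_fifth_le_augU h t f
end

section
/- Zero-sum margin bound: if P2's subgame strategy σ^S_2 satisfies margin M(I_1) = α(I_1) - v(I_1) ≥ m for all root infosets I_1 and some m ≥ 0, then P1's best-response value of the augmented Resolving game is at most the π_{-1}-weighted average of α(I_1) minus m·q, where q is the total probability a best-responding P1 enters the subgame; in particular it is at most the weighted average of α(I_1). -/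
/-!
Entering at `I` with probability `t` replaces the payoff `α I` by `v I ≤ α I - m` on that
fraction of the mass, so it costs at least `m · t`; weighting by `w I ≥ 0` and summing gives a
loss of at least `m · q`, which is nonnegative.
-/

open Finset

section MarginBound

variable {R : Type*} [CommRing R] [LinearOrder R] [IsStrictOrderedRing R]

theorem mix_le_sub_mul_of_le_sub {t a b m : R} (ht : 0 ≤ t) (hm : m ≤ a - b) :
    t * b + (1 - t) * a ≤ a - m * t := by
  have : m * t ≤ (a - b) * t := mul_le_mul_of_nonneg_right hm ht
  linarith

theorem sum_mul_mix_le_sub_mul_sum {ι : Type*} (s : Finset ι) {w e α v : ι → R} {m : R}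
    (hw : ∀ I, 0 ≤ w I) (he : ∀ I, 0 ≤ e I) (hmargin : ∀ I, m ≤ α I - v I) :
    ∑ I ∈ s, w I * (e I * v I + (1 - e I) * α I) ≤
      ∑ I ∈ s, w I * α I - m * ∑ I ∈ s, w I * e I := by
  rw [mul_sum, ← sum_sub_distrib]
  refine sum_le_sum fun I _ => ?_
  calc w I * (e I * v I + (1 - e I) * α I)
      ≤ w I * (α I - m * e I) :=
        mul_le_mul_of_nonneg_left (mix_le_sub_mul_of_le_sub (he I) (hmargin I)) (hw I)
    _ = w I * α I - m * (w I * e I) := by ring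

end MarginBound

theorem resolving_margin_bound_general
    {ι : Type*} [Fintype ι]
    (w : ι → ℝ) (hw : ∀ I, 0 ≤ w I)
    (α v : ι → ℝ) (m : ℝ) (hm : 0 ≤ m)
    (hmargin : ∀ I, m ≤ α I - v I)
    (U : (ι → ℝ) → ℝ)
    (hU : ∀ e : ι → ℝ, U e = ∑ I, w I * (e I * v I + (1 - e I) * α I))
    (e : ι → ℝ) (he : ∀ I, e I ∈ Set.Icc (0:ℝ) 1)
    (q : ℝ) (hq : q = ∑ I, w I * e I) :
    U e ≤ (∑ I, w I * α I) - m * q ∧ U e ≤ ∑ I, w I * α I := by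
  have hbound : U e ≤ (∑ I, w I * α I) - m * q := by
    rw [hU, hq]
    exact sum_mul_mix_le_sub_mul_sum _ hw (fun I => (he I).1) hmargin
  have hq_nonneg : 0 ≤ q := hq ▸ sum_nonneg fun I _ => mul_nonneg (hw I) (he I).1
  exact ⟨hbound, hbound.trans (sub_le_self _ (mul_nonneg hm hq_nonneg))⟩

/-- **Zero-sum margin bound.** In the Resolving augmented game (chance over root
infosets with weights `w I ≥ 0` summing to 1; player 1 chooses the alternative
payoff `α I` or enters with value `v I`), if player 2's subgame strategy gives
every infoset margin `α I - v I ≥ m ≥ 0`, and `e` is a player-1 best response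
with total entering probability `q = ∑ I, w I * e I`, then player 1's
best-response value `U e` is at most `(∑ I, w I * α I) - m·q`; in particular it
is at most the weighted average of the alternative payoffs. -/
theorem resolving_margin_bound
    {ι : Type*} [Fintype ι]
    (w : ι → ℝ) (hw : ∀ I, 0 ≤ w I) (hw1 : ∑ I, w I = 1)
    (α v : ι → ℝ) (m : ℝ) (hm : 0 ≤ m)
    (hmargin : ∀ I, m ≤ α I - v I)
    (U : (ι → ℝ) → ℝ)
    (hU : ∀ e : ι → ℝ, U e = ∑ I, w I * (e I * v I + (1 - e I) * α I))
    (e : ι → ℝ) (he : ∀ I, e I ∈ Set.Icc (0:ℝ) 1)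
    (hBR : ∀ e' : ι → ℝ, (∀ I, e' I ∈ Set.Icc (0:ℝ) 1) → U e' ≤ U e)
    (q : ℝ) (hq : q = ∑ I, w I * e I) :
    U e ≤ (∑ I, w I * α I) - m * q ∧ U e ≤ ∑ I, w I * α I :=
  resolving_margin_bound_general w hw α v m hm hmargin U hU e he q hq
end

section
/- Nested subgame solving consistency: suppose subgame solving applied after an off-tree action a uses alternative payoffs α(I_1) = CBV^{σ*_2}(I_1) equal to the counterfactual best-response values against an optimal strategy σ*_2, and produces σ'_2 making all margins nonnegative. Then P1's best-response value at each I_1 against σ'_2 after taking a is at most CBV^{σ*_2}(I_1), so the combined strategy's exploitability is at most exp(σ*_2) plus the exploitability contribution of the unchanged blueprint outside the subgame. -/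
theorem max_le_max_add_max_zero_sub {α : Type*} [AddCommGroup α] [LinearOrder α]
    [IsOrderedAddMonoid α] {a b c d : α} (hbd : b ≤ d) :
    max a b ≤ max c d + max 0 (a - c) := by
  have hpos : 0 ≤ max 0 (a - c) := le_max_left _ _
  refine max_le ?_ ?_
  · calc a ≤ c + max 0 (a - c) := sub_le_iff_le_add'.mp (le_max_right _ _)
      _ ≤ max c d + max 0 (a - c) := add_le_add_left (le_max_left _ _) _
  · calc b ≤ max c d := hbd.trans (le_max_right _ _)
      _ ≤ max c d + max 0 (a - c) := le_add_of_nonneg_right hpos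

/-- `w` are the reach weights of the subgame's root infosets, `v` player 1's best-response values
there against the refined strategy, `outBlue` / `outStar` player 1's best value outside the subgame
against the blueprint / against `σ*₂`, and `gv` the game value. -/
theorem nested_subgame_solving_consistency
    {ι : Type*} [Fintype ι]
    (w : ι → ℝ) (hw : ∀ I, 0 ≤ w I)
    (cbvstar : ι → ℝ)
    (α : ι → ℝ) (hα : ∀ I, α I = cbvstar I)
    (v : ι → ℝ)
    (hmargins : ∀ I, 0 ≤ α I - v I)
    (outBlue outStar gv : ℝ) :
    (∀ I, v I ≤ cbvstar I) ∧
    max outBlue (∑ I, w I * v I) - gv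
      ≤ (max outStar (∑ I, w I * cbvstar I) - gv) + max 0 (outBlue - outStar) := by
  have hv : ∀ I, v I ≤ cbvstar I := fun I => sub_nonneg.mp (hα I ▸ hmargins I)
  have henter : ∑ I, w I * v I ≤ ∑ I, w I * cbvstar I :=
    Finset.sum_le_sum fun I _ => mul_le_mul_of_nonneg_left (hv I) (hw I)
  refine ⟨hv, ?_⟩
  rw [sub_add_eq_add_sub]
  exact sub_le_sub_right (max_le_max_add_max_zero_sub henter) gv
end
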